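/- There is a rational trace language that is not fnf-automatic: for independent letters a, b, the language L = {[aab]^n | n ∈ ℕ} ⊆ M is rational, but its language of extended Foata normal forms, namely {a,b}^n {a}^n ∅^m (for m, n ∈ ℕ), is not regular, so L is not fnf-automatic. -/

import Mathlib

def Indep {α : Type*} (D : α → α → Prop) (a b : α) : Prop := a ≠ b ∧ ¬ D a b

/-- The trace congruence: least monoid congruence with `ab ∼ ba` for independent `(a,b)`. -/
def traceCon {α : Type*} (D : α → α → Prop) : Con (FreeMonoid α) :=
  conGen (fun u v => ∃ a b, Indep D a b ∧
    u = FreeMonoid.of a * FreeMonoid.of b ∧ v = FreeMonoid.of b * FreeMonoid.of a)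

/-- A finite set of letters is independent if its distinct elements are pairwise
independent. -/
def IndepSet {α : Type*} (D : α → α → Prop) (A : Finset α) : Prop :=
  ∀ a ∈ A, ∀ b ∈ A, a ≠ b → Indep D a b

/-- `D(A)`: the set of letters dependent on some letter of `A`. -/
def DepSet {α : Type*} (D : α → α → Prop) (A : Finset α) : Set α :=
  {b | ∃ a ∈ A, D a b}

/-- A word over the alphabet of (independent) subsets of `Σ` is in extended Foata
normal form if each letter is contained in `D` of its predecessor. -/
def eFNF {α : Type*} (D : α → α → Prop) (W : List (Finset α)) : Prop :=
  W.Chain' (fun A B => ↑B ⊆ DepSet D A)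

/-- The trace induced by a word over subsets of `Σ` (the homomorphism `[·] : F* → M`). -/
noncomputable def traceOf {α : Type*} (D : α → α → Prop) (W : List (Finset α)) :
    (traceCon D).Quotient :=
  (traceCon D).mk' (FreeMonoid.ofList (W.flatMap Finset.toList))

/-- The convolution language `L_R ⊆ (F^k)*` of a `k`-ary trace relation `R`: the words
over `F^k` all of whose component words are in extended Foata normal form (over
independent sets) and represent a tuple of traces belonging to `R`. -/
def LRel {α : Type*} (D : α → α → Prop) {k : ℕ}
    (R : Set (Fin k → (traceCon D).Quotient)) : Language (Fin k → Finset α) :=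
  {W | (∀ i : Fin k, (∀ A ∈ W.map (fun f => f i), IndepSet D A) ∧
          eFNF D (W.map (fun f => f i))) ∧
    (fun i => traceOf D (W.map (fun f => f i))) ∈ R}

/-- A `k`-ary trace relation is fnf-automatic if its convolution language is regular. -/
def FnfAutomatic {α : Type*} (D : α → α → Prop) {k : ℕ}
    (R : Set (Fin k → (traceCon D).Quotient)) : Prop :=
  (LRel D R).IsRegular

/-- The language of extended Foata normal forms of elements of a trace language. -/
def LLang {α : Type*} (D : α → α → Prop) (L : Set (traceCon D).Quotient) :
    Language (Finset α) :=
  {W | (∀ A ∈ W, IndepSet D A) ∧ eFNF D W ∧ traceOf D W ∈ L}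

/-- A trace language is fnf-automatic if its language of extended Foata normal forms
is regular. -/
def FnfAutomaticLang {α : Type*} (D : α → α → Prop)
    (L : Set (traceCon D).Quotient) : Prop :=
  (LLang D L).IsRegular
/-- A subset of a monoid is rational if it is the homomorphic image of a regular
language. -/
def IsRationalSubset {N : Type*} [Monoid N] (S : Set N) : Prop :=
  ∃ (β : Type) (_ : Fintype β) (L : Language β) (φ : FreeMonoid β →* N),
    L.IsRegular ∧ S = φ '' {w : FreeMonoid β | w.toList ∈ L}

section Stmt16Aux

open FreeMonoid List

variable {α : Type*} [DecidableEq α]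

private def cntHom (c : α) : FreeMonoid α →* Multiplicative ℕ :=
  FreeMonoid.lift (fun x => Multiplicative.ofAdd (if x = c then 1 else 0))

private lemma cntHom_apply (c : α) (w : FreeMonoid α) :
    cntHom c w = Multiplicative.ofAdd (w.toList.count c) := by
  rw [cntHom, FreeMonoid.lift_apply]
  induction w.toList with
  | nil => rfl
  | cons x l ih =>
    rw [List.map_cons, List.prod_cons, ih, List.count_cons]
    by_cases h : x = c <;> simp [h, ← ofAdd_add] <;> ring_nf

private lemma count_eq_of_traceCon {D : α → α → Prop} {u v : FreeMonoid α}
    (h : traceCon D u v) (c : α) : u.toList.count c = v.toList.count c := by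
  have hle : traceCon D ≤ Con.ker (cntHom c) := by
    apply Con.conGen_le.2
    rintro x y ⟨p, q, _, rfl, rfl⟩
    simp only [Con.ker_rel, map_mul]
    exact mul_comm _ _
  have h2 := hle h
  rw [Con.ker_rel, cntHom_apply, cntHom_apply] at h2
  exact Multiplicative.ofAdd.injective h2

private lemma count_eq_of_mk'_eq {D : α → α → Prop} {u v : FreeMonoid α}
    (h : (traceCon D).mk' u = (traceCon D).mk' v) (c : α) :
    u.toList.count c = v.toList.count c :=
  count_eq_of_traceCon ((Con.eq _).1 h) c

private lemma count_toList_pow (w : FreeMonoid α) (m : ℕ) (c : α) :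
    (FreeMonoid.toList (w ^ m)).count c = m * (w.toList.count c) := by
  induction m with
  | zero => simp [pow_zero, FreeMonoid.toList_one]
  | succ m ih =>
    rw [pow_succ, FreeMonoid.toList_mul, List.count_append, ih]
    ring

private lemma perm_pair_cases {β : Type*} {x y : β} {l : List β} (h : l.Perm [x, y]) :
    l = [x, y] ∨ l = [y, x] := by
  rcases l with _ | ⟨p, _ | ⟨q, _ | ⟨r, t⟩⟩⟩
  · simpa using h.length_eq
  · simpa using h.length_eq
  · have hp : p = x ∨ p = y := by simpa using h.subset (by simp)
    have hq : q = x ∨ q = y := by simpa using h.subset (by simp)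
    rcases hp with hp | hp <;> rcases hq with hq | hq
    · have h' : y = p ∨ y = q := by simpa using h.symm.subset (show y ∈ [x, y] by simp)
      have hyx : y = x := by
        rcases h' with h' | h'
        · rw [h', hp]
        · rw [h', hq]
      left; rw [hp, hq, hyx]
    · left; rw [hp, hq]
    · right; rw [hp, hq]
    · have h' : x = p ∨ x = q := by simpa using h.symm.subset (show x ∈ [x, y] by simp)
      have hxy : x = y := by
        rcases h' with h' | h'
        · rw [h', hp]
        · rw [h', hq]
      left; rw [hp, hq, hxy]
  · simpa using h.length_eq

private lemma chain'_rep_rep {β : Type*} {R : β → β → Prop} {A B : β}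
    (hAA : R A A) (hAB : R A B) (hBB : R B B) (n m : ℕ) :
    List.Chain' R (List.replicate n A ++ List.replicate m B) := by
  induction n with
  | zero =>
    simp only [List.replicate, List.nil_append]
    induction m with
    | zero => exact List.isChain_nil
    | succ m ihm =>
      rw [List.replicate_succ]
      refine List.IsChain.cons ihm ?_
      intro y hy
      rcases m with _ | m
      · simp at hy
      · rw [List.replicate_succ, List.head?_cons, Option.mem_some_iff] at hy
        subst hy; exact hBB
  | succ n ihn =>
    rw [List.replicate_succ, List.cons_append]
    refine List.IsChain.cons ihn ?_
    intro y hy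
    have : y = A ∨ y = B := by
      rcases n with _ | n
      · rcases m with _ | m
        · simp at hy
        · rw [List.replicate, List.nil_append, List.replicate_succ,
            List.head?_cons, Option.mem_some_iff] at hy
          exact Or.inr hy.symm
      · rw [List.replicate_succ, List.cons_append, List.head?_cons,
          Option.mem_some_iff] at hy
        exact Or.inl hy.symm
    rcases this with rfl | rfl
    · exact hAA
    · exact hAB

private lemma traceOf_append (D : α → α → Prop) (W₁ W₂ : List (Finset α)) :
    traceOf D (W₁ ++ W₂) = traceOf D W₁ * traceOf D W₂ := by
  unfold traceOf
  rw [List.flatMap_append]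
  exact map_mul _ _ _

private lemma traceOf_replicate (D : α → α → Prop) (A : Finset α) (n : ℕ) :
    traceOf D (List.replicate n A) = (traceOf D [A]) ^ n := by
  induction n with
  | zero => simp [traceOf, pow_zero]
  | succ n ih =>
    rw [List.replicate_succ, show (A :: List.replicate n A)
      = [A] ++ List.replicate n A from rfl, traceOf_append, ih, pow_succ']

end Stmt16Aux
/-- For independent letters `a, b`, the trace language `{[aab]^n | n ∈ ℕ}` is rational
but not fnf-automatic. -/
theorem stmt16 {α : Type*} [Fintype α] [DecidableEq α] (D : α → α → Prop)
    (hrefl : ∀ a, D a a) (hsymm : ∀ a b, D a b → D b a)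
    (a b : α) (hab : Indep D a b) :
    IsRationalSubset
      {x : (traceCon D).Quotient |
        ∃ n : ℕ, x = ((traceCon D).mk' (FreeMonoid.ofList [a, a, b])) ^ n} ∧
    ¬ FnfAutomaticLang D
      {x : (traceCon D).Quotient |
        ∃ n : ℕ, x = ((traceCon D).mk' (FreeMonoid.ofList [a, a, b])) ^ n} := by
  obtain ⟨hne, hnD⟩ := hab
  constructor
  · -- Rationality
    refine ⟨Unit, inferInstance, (Set.univ : Language Unit),
      FreeMonoid.lift (fun _ => (traceCon D).mk' (FreeMonoid.ofList [a, a, b])),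
      ⟨Unit, inferInstance, ⟨fun _ _ => (), (), Set.univ⟩, ?_⟩, ?_⟩
    · ext x
      simp only [DFA.mem_accepts]
      exact iff_of_true (Set.mem_univ _) (Set.mem_univ _)
    · ext x
      simp only [Set.mem_setOf_eq, Set.mem_image, Set.mem_univ, true_and]
      constructor
      · rintro ⟨n, rfl⟩
        refine ⟨FreeMonoid.ofList (List.replicate n ()), Set.mem_univ _, ?_⟩
        rw [FreeMonoid.lift_ofList, List.map_replicate, List.prod_replicate]
      · rintro ⟨w, -, rfl⟩
        refine ⟨w.toList.length, ?_⟩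
        rw [FreeMonoid.lift_apply, List.map_const', List.prod_replicate]
  · -- Not fnf-automatic
    rintro ⟨σ, _, M, hM⟩
    set n := Fintype.card σ with hn
    have hba : Indep D b a := ⟨hne.symm, fun h => hnD (hsymm _ _ h)⟩
    have hpair_perm : ({a, b} : Finset α).toList.Perm [a, b] := by
      have h1 : a ∉ ({b} : Finset α) := by simp [hne]
      simpa [Finset.toList_singleton] using Finset.toList_insert h1
    have hcpa : ({a, b} : Finset α).toList.count a = 1 := by
      rw [hpair_perm.count_eq]; simp [List.count_cons, hne.symm]
    have hcpb : ({a, b} : Finset α).toList.count b = 1 := by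
      rw [hpair_perm.count_eq]; simp [List.count_cons, hne]
    have hsingle : ({a} : Finset α).toList = [a] := Finset.toList_singleton a
    have hsetne : ({a} : Finset α) ≠ ({a, b} : Finset α) := by
      intro h
      have hb : b ∈ ({a} : Finset α) := h ▸ (by simp)
      exact hne.symm (by simpa using hb)
    -- counting letters in flattened words
    have hcounts : ∀ W : List (Finset α),
        (∀ A ∈ W, A = ({a, b} : Finset α) ∨ A = ({a} : Finset α)) →
        (W.flatMap Finset.toList).count a = W.length ∧
        (W.flatMap Finset.toList).count b = W.count ({a, b} : Finset α) := by
      intro W hW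
      induction W with
      | nil => simp
      | cons A W ih =>
        obtain ⟨h1, h2⟩ := ih (fun B hB => hW B (List.mem_cons_of_mem _ hB))
        rcases hW A List.mem_cons_self with rfl | rfl
        · constructor
          · rw [List.flatMap_cons, List.count_append, h1, hcpa, List.length_cons]
            omega
          · rw [List.flatMap_cons, List.count_append, h2, hcpb, List.count_cons_self]
            omega
        · constructor
          · have e : List.count a [a] = 1 := by simp
            rw [List.flatMap_cons, List.count_append, h1, hsingle, e, List.length_cons]
            omega
          · have e : List.count b [a] = 0 := by simp [List.count_cons, hne.symm, hne]
            have e2 : List.count ({a, b} : Finset α) (({a} : Finset α) :: W)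
                = List.count ({a, b} : Finset α) W := by
              simp [List.count_cons, hsetne]
            rw [List.flatMap_cons, List.count_append, h2, hsingle, e, e2]
            omega
    -- the key consequence of being in the language
    have hKey : ∀ W : List (Finset α),
        (∀ A ∈ W, A = ({a, b} : Finset α) ∨ A = ({a} : Finset α)) →
        (∃ m : ℕ, traceOf D W = ((traceCon D).mk' (FreeMonoid.ofList [a, a, b])) ^ m) →
        W.length = 2 * W.count ({a, b} : Finset α) := by
      rintro W hW ⟨m, hm⟩
      have hm' : (traceCon D).mk' (FreeMonoid.ofList (W.flatMap Finset.toList))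
          = (traceCon D).mk' ((FreeMonoid.ofList [a, a, b]) ^ m) :=
        hm.trans (map_pow ((traceCon D).mk') (FreeMonoid.ofList [a, a, b]) m).symm
      have hca := count_eq_of_mk'_eq hm' a
      have hcb := count_eq_of_mk'_eq hm' b
      rw [FreeMonoid.toList_ofList, count_toList_pow] at hca hcb
      have h2a : (FreeMonoid.toList (FreeMonoid.ofList [a, a, b])).count a = 2 := by
        rw [FreeMonoid.toList_ofList]; simp [List.count_cons, hne.symm]
      have h2b : (FreeMonoid.toList (FreeMonoid.ofList [a, a, b])).count b = 1 := by
        rw [FreeMonoid.toList_ofList]; simp [List.count_cons, hne]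
      rw [h2a] at hca
      rw [h2b] at hcb
      obtain ⟨hLa, hLb⟩ := hcounts W hW
      omega
    -- the witness word
    set Wn : List (Finset α) :=
      List.replicate n ({a, b} : Finset α) ++ List.replicate n ({a} : Finset α) with hWn
    have hWnmem : ∀ A ∈ Wn, A = ({a, b} : Finset α) ∨ A = ({a} : Finset α) := by
      intro A hA
      rcases List.mem_append.1 hA with h | h
      · exact Or.inl (List.eq_of_mem_replicate h)
      · exact Or.inr (List.eq_of_mem_replicate h)
    -- traceOf Wn
    have hswap : (traceCon D).mk' (FreeMonoid.ofList [b, a])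
        = (traceCon D).mk' (FreeMonoid.ofList [a, b]) :=
      (Con.eq _).2 (ConGen.Rel.of _ _ ⟨b, a, hba, rfl, rfl⟩)
    have hv : (traceCon D).mk' (FreeMonoid.ofList ({a, b} : Finset α).toList)
        = (traceCon D).mk' (FreeMonoid.ofList [a, b]) := by
      rcases perm_pair_cases hpair_perm with h | h
      · rw [h]
      · rw [h]; exact hswap
    have hcomm : Commute ((traceCon D).mk' (FreeMonoid.ofList [a]))
        ((traceCon D).mk' (FreeMonoid.ofList [a, b])) := by
      show _ * _ = _ * _
      have h1 := (map_mul ((traceCon D).mk') (FreeMonoid.ofList [a])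
        (FreeMonoid.ofList [a, b])).symm
      have h2 := (map_mul ((traceCon D).mk') (FreeMonoid.ofList [a, b])
        (FreeMonoid.ofList [a])).symm
      rw [h1, h2]
      have key : (traceCon D) (FreeMonoid.of a * (FreeMonoid.of a * FreeMonoid.of b))
          (FreeMonoid.of a * (FreeMonoid.of b * FreeMonoid.of a)) :=
        (traceCon D).mul ((traceCon D).refl (FreeMonoid.of a))
          (ConGen.Rel.of _ _ ⟨a, b, ⟨hne, hnD⟩, rfl, rfl⟩)
      exact (Con.eq _).2 key
    have htuv : (traceCon D).mk' (FreeMonoid.ofList [a, a, b])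
        = (traceCon D).mk' (FreeMonoid.ofList [a]) *
          (traceCon D).mk' (FreeMonoid.ofList [a, b]) :=
      map_mul ((traceCon D).mk') (FreeMonoid.ofList [a]) (FreeMonoid.ofList [a, b])
    have htrWn : traceOf D Wn
        = ((traceCon D).mk' (FreeMonoid.ofList [a, a, b])) ^ n := by
      rw [hWn, traceOf_append, traceOf_replicate, traceOf_replicate]
      have e1 : traceOf D [({a, b} : Finset α)]
          = (traceCon D).mk' (FreeMonoid.ofList [a, b]) := by
        rw [traceOf, List.flatMap_cons, List.flatMap_nil, List.append_nil]
        exact hv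
      have e2 : traceOf D [({a} : Finset α)]
          = (traceCon D).mk' (FreeMonoid.ofList [a]) := by
        rw [traceOf, List.flatMap_cons, List.flatMap_nil, List.append_nil, hsingle]
      rw [e1, e2, htuv, hcomm.mul_pow, (hcomm.pow_pow n n).eq]
    -- Wn is in the language LLang
    have hsub : ∀ (A B : Finset α), B ⊆ A → (↑B : Set α) ⊆ DepSet D A :=
      fun A B h x hx => ⟨x, h (Finset.mem_coe.1 hx), hrefl x⟩
    have hWmem : Wn ∈ LLang D {x : (traceCon D).Quotient |
        ∃ m : ℕ, x = ((traceCon D).mk' (FreeMonoid.ofList [a, a, b])) ^ m} := by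
      refine ⟨?_, ?_, n, htrWn⟩
      · intro A hA
        rcases hWnmem A hA with rfl | rfl
        · intro x hx y hy hxy
          simp only [Finset.mem_insert, Finset.mem_singleton] at hx hy
          rcases hx with rfl | rfl <;> rcases hy with rfl | rfl
          · exact absurd rfl hxy
          · exact ⟨hne, hnD⟩
          · exact hba
          · exact absurd rfl hxy
        · intro x hx y hy hxy
          simp only [Finset.mem_singleton] at hx hy
          subst hx; subst hy; exact absurd rfl hxy
      · exact chain'_rep_rep
          (R := fun (A B : Finset α) => (B : Set α) ⊆ DepSet D A)
          (hsub _ _ Finset.Subset.rfl)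
          (hsub _ _ (Finset.singleton_subset_iff.2 (Finset.mem_insert_self a {b})))
          (hsub _ _ Finset.Subset.rfl) n n
    -- pumping
    have hacc : Wn ∈ M.accepts := by rw [hM]; exact hWmem
    obtain ⟨x, y, z, hxyz, hlen, hy, hpump⟩ := M.pumping_lemma hacc
      (by simp only [hWn, List.length_append, List.length_replicate, ← hn]; omega)
    have hmem : (x ++ (y ++ y)) ++ z ∈ ({x} : Language (Finset α)) * KStar.kstar {y} * {z} := by
      refine Language.mem_mul.2 ⟨x ++ (y ++ y), ?_, z, rfl, rfl⟩
      refine Language.mem_mul.2 ⟨x, rfl, y ++ y, ?_, rfl⟩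
      exact Language.mem_kstar.2 ⟨[y, y], by simp,
        fun w hw => by rcases List.mem_pair.1 hw with rfl | rfl <;> rfl⟩
    have hacc' : (x ++ (y ++ y)) ++ z ∈ LLang D {x : (traceCon D).Quotient |
        ∃ m : ℕ, x = ((traceCon D).mk' (FreeMonoid.ofList [a, a, b])) ^ m} := by
      rw [← hM]; exact hpump hmem
    -- all letters of y are {a,b}
    have hyall : ∀ A ∈ y, A = ({a, b} : Finset α) := by
      intro A hA
      have hpre : x ++ y <+: Wn := ⟨z, hxyz.symm⟩
      have hlen2 : (x ++ y).length ≤ n := by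
        rw [List.length_append]; exact hlen
      have htake : x ++ y = Wn.take ((x ++ y).length) :=
        List.prefix_iff_eq_take.1 hpre
      have htake2 : Wn.take ((x ++ y).length)
          = (List.replicate n ({a, b} : Finset α)).take ((x ++ y).length) := by
        rw [hWn, List.take_append_of_le_length (by simpa using hlen2)]
      have hmem2 : A ∈ (List.replicate n ({a, b} : Finset α)).take ((x ++ y).length) := by
        rw [← htake2, ← htake]
        exact List.mem_append_right _ hA
      exact List.eq_of_mem_replicate (List.mem_of_mem_take hmem2)
    have hW'mem : ∀ A ∈ (x ++ (y ++ y)) ++ z,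
        A = ({a, b} : Finset α) ∨ A = ({a} : Finset α) := by
      intro A hA
      apply hWnmem
      rw [hxyz]
      simp only [List.mem_append] at hA ⊢
      tauto
    have hlenW' := hKey _ hW'mem hacc'.2.2
    have hlenWn := hKey Wn hWnmem ⟨n, htrWn⟩
    have hcy : y.count ({a, b} : Finset α) = y.length :=
      List.count_eq_length.2 (fun B hB => ((hyall B hB) ▸ rfl))
    have hy0 : 0 < y.length := List.length_pos_iff.2 hy
    rw [hxyz] at hlenWn
    simp only [List.count_append, List.length_append] at hlenW' hlenWn
    omega
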